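/- The group S₃^ℤ with presentation ⟨σ₁, σ₂ ∣ σ₁σ₂σ₁ = σ₂σ₁σ₂, σ₁² = σ₂²⟩ is not isomorphic to the direct product S₃ × ℤ of the symmetric group on three elements with the infinite cyclic group; that is, S₃^ℤ is a nontrivial central extension of S₃ by ℤ. -/
import Mathlib


/-- Relators of the group `S₃^ℤ`: `σ₁σ₂σ₁σ₂⁻¹σ₁⁻¹σ₂⁻¹` and `σ₁²σ₂⁻²`. -/
def S3ZRels : Set (FreeGroup (Fin 2)) :=
  { FreeGroup.of 0 * FreeGroup.of 1 * FreeGroup.of 0 *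
      (FreeGroup.of 1)⁻¹ * (FreeGroup.of 0)⁻¹ * (FreeGroup.of 1)⁻¹,
    FreeGroup.of 0 ^ 2 * (FreeGroup.of 1 ^ 2)⁻¹ }

/-- The braid relator is killed in the presented group. -/
lemma braid_rel_one :
    (PresentedGroup.mk S3ZRels (FreeGroup.of 0 * FreeGroup.of 1 * FreeGroup.of 0 *
      (FreeGroup.of 1)⁻¹ * (FreeGroup.of 0)⁻¹ * (FreeGroup.of 1)⁻¹)) = 1 := by
  exact (QuotientGroup.eq_one_iff _).mpr
    (Subgroup.subset_normalClosure (Set.mem_insert _ _))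

/-- Any hom from the presented group to `ℤˣ` sends both generators
to the same element. -/
lemma gen_eq (φ : PresentedGroup S3ZRels →* ℤˣ) :
    φ (PresentedGroup.of 0) = φ (PresentedGroup.of 1) := by
  have h := congrArg φ braid_rel_one
  simp only [map_mul, map_inv, map_one] at h
  set a := φ (PresentedGroup.of 0) with ha
  set b := φ (PresentedGroup.of 1) with hb
  have h2 : a * b * a * b⁻¹ * a⁻¹ * b⁻¹ = 1 := h
  rcases Int.units_eq_one_or a with h3 | h3 <;>
  rcases Int.units_eq_one_or b with h4 | h4 <;>
    rw [h3, h4] <;> rw [h3, h4] at h2 <;> first | rfl | (exfalso; revert h2; decide)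

theorem stmt_12 :
    ¬ Nonempty (PresentedGroup S3ZRels ≃* (Equiv.Perm (Fin 3) × Multiplicative ℤ)) := by
  rintro ⟨e⟩
  set H := Equiv.Perm (Fin 3) × Multiplicative ℤ
  set f₁ : H →* ℤˣ := 1 with hf₁
  set f₂ : H →* ℤˣ := (Equiv.Perm.sign).comp (MonoidHom.fst _ _) with hf₂
  set f₃ : H →* ℤˣ := (zpowersHom ℤˣ (-1)).comp (MonoidHom.snd _ _) with hf₃
  have key : ∀ f g : H →* ℤˣ,
      (f.comp e.toMonoidHom) (PresentedGroup.of 0) =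
      (g.comp e.toMonoidHom) (PresentedGroup.of 0) → f = g := by
    intro f g h
    have h1 : f.comp e.toMonoidHom = g.comp e.toMonoidHom := by
      apply PresentedGroup.ext
      intro x
      fin_cases x
      · exact h
      · exact (gen_eq (f.comp e.toMonoidHom)).symm.trans
          (h.trans (gen_eq (g.comp e.toMonoidHom)))
    refine MonoidHom.ext fun x => ?_
    have := congrArg (fun φ : PresentedGroup S3ZRels →* ℤˣ => φ (e.symm x)) h1
    simpa using this
  have d12 : f₁ ≠ f₂ := by
    intro h
    have := congrArg (fun φ : H →* ℤˣ => φ (Equiv.swap 0 1, 1)) h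
    exact absurd this (by decide)
  have d13 : f₁ ≠ f₃ := by
    intro h
    have := congrArg (fun φ : H →* ℤˣ => φ (1, Multiplicative.ofAdd 1)) h
    exact absurd this (by decide)
  have d23 : f₂ ≠ f₃ := by
    intro h
    have := congrArg (fun φ : H →* ℤˣ => φ (Equiv.swap 0 1, 1)) h
    exact absurd this (by decide)
  set v : (H →* ℤˣ) → ℤˣ := fun f => (f.comp e.toMonoidHom) (PresentedGroup.of 0) with hv
  rcases Int.units_eq_one_or (v f₁) with h1 | h1 <;>
  rcases Int.units_eq_one_or (v f₂) with h2 | h2 <;>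
  rcases Int.units_eq_one_or (v f₃) with h3 | h3
  · exact d12 (key _ _ (h1.trans h2.symm))
  · exact d12 (key _ _ (h1.trans h2.symm))
  · exact d13 (key _ _ (h1.trans h3.symm))
  · exact d23 (key _ _ (h2.trans h3.symm))
  · exact d23 (key _ _ (h2.trans h3.symm))
  · exact d13 (key _ _ (h1.trans h3.symm))
  · exact d12 (key _ _ (h1.trans h2.symm))
  · exact d12 (key _ _ (h1.trans h2.symm))
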